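/- Let Q ⊆ 𝔽₂^m and R ⊆ 𝔽₂ⁿ be powerful sets such that |Q| = |R|, the all-ones vector of length m is not in Q, and the all-ones vector of length n is not in R. Then the mutual framing Q#R ⊆ 𝔽₂^{m+n} is a powerful set. -/

import Mathlib

/-- A finite set `S` of vectors in `𝔽₂ⁿ` is *powerful* if for every subset `X` of the
coordinate positions, the number of vectors in `S` that are zero at every position in `X`
is a power of 2. -/
def IsPowerful {n : ℕ} (S : Finset (Fin n → ZMod 2)) : Prop :=
  ∀ X : Finset (Fin n), ∃ d : ℕ, (S.filter (fun v => ∀ i ∈ X, v i = 0)).card = 2 ^ d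

/-- The mutual framing `Q#R ⊆ 𝔽₂^{m+n}`: the zero vector; `u1ₙ` for each nonzero `u ∈ Q`;
`1ₘv` for each nonzero `v ∈ R`; and the all-ones vector. -/
def mutualFraming {m n : ℕ} (Q : Finset (Fin m → ZMod 2)) (R : Finset (Fin n → ZMod 2)) :
    Finset (Fin (m + n) → ZMod 2) :=
  insert 0 (insert (fun _ => 1)
    (((Q.filter (fun u => u ≠ 0)).image (fun u => Fin.append u (fun _ => 1))) ∪
     ((R.filter (fun v => v ≠ 0)).image (fun v => Fin.append (fun _ => (1 : ZMod 2)) v))))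

/-!
Split `X` into its traces `L ⊆ Fin m` and `R' ⊆ Fin n` on the two blocks. A vector `u1ₙ`
vanishes on `X` iff `R' = ∅` and `u` vanishes on `L`, symmetrically for `1ₘv`, and the all-ones
vector vanishes only on `X = ∅`. So for `X ≠ ∅` the vectors of `Q#R` vanishing on `X` are `0`
and, if `R' = ∅`, one vector per nonzero `u ∈ Q` vanishing on `L`, and, if `L = ∅`, one per
nonzero `v ∈ R` vanishing on `R'`: their number is that of `Q` on `L`, of `R` on `R'`, or `1`.
For `X = ∅`, the all-ones hypotheses keep the four parts of `Q#R` disjoint, so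
`|Q#R| = |Q| + |R| = 2|Q|`.
-/

open Finset Function

namespace Fin

variable {α : Type*} {m n : ℕ}

theorem append_inj {u u' : Fin m → α} {v v' : Fin n → α} :
    append u v = append u' v' ↔ u = u' ∧ v = v' :=
  ((appendEquiv m n).injective.eq_iff (a := (u, v)) (b := (u', v'))).trans Prod.mk_inj

theorem append_left_injective (v : Fin n → α) : Injective fun u : Fin m → α => append u v :=
  fun _ _ h => (append_inj.1 h).1

theorem append_right_injective (u : Fin m → α) : Injective fun v : Fin n → α => append u v :=
  fun _ _ h => (append_inj.1 h).2

theorem append_const (a : α) : append (fun _ : Fin m => a) (fun _ : Fin n => a) = fun _ => a :=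
  append_castAdd_natAdd (f := fun _ => a)

theorem append_eq_const_iff {u : Fin m → α} {v : Fin n → α} {a : α} :
    append u v = (fun _ => a) ↔ u = (fun _ => a) ∧ v = fun _ => a := by
  rw [← append_const a (m := m) (n := n), append_inj]

theorem append_eq_zero_iff [Zero α] {u : Fin m → α} {v : Fin n → α} :
    append u v = 0 ↔ u = 0 ∧ v = 0 :=
  append_eq_const_iff

end Fin

section Coords

variable {m n : ℕ}

def leftCoords (X : Finset (Fin (m + n))) : Finset (Fin m) :=
  {i | Fin.castAdd n i ∈ X}

def rightCoords (X : Finset (Fin (m + n))) : Finset (Fin n) :=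
  {j | Fin.natAdd m j ∈ X}

theorem eq_empty_of_leftCoords_eq_empty_of_rightCoords_eq_empty {X : Finset (Fin (m + n))}
    (hL : leftCoords X = ∅) (hR : rightCoords X = ∅) : X = ∅ := by
  refine eq_empty_of_forall_notMem fun i hi => ?_
  induction i using Fin.addCases with
  | left i => exact notMem_empty i (hL ▸ mem_filter.2 ⟨mem_univ i, hi⟩)
  | right j => exact notMem_empty j (hR ▸ mem_filter.2 ⟨mem_univ j, hi⟩)

theorem forall_mem_append_eq_zero_iff {M : Type*} [Zero M] {X : Finset (Fin (m + n))}
    {u : Fin m → M} {v : Fin n → M} :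
    (∀ i ∈ X, Fin.append u v i = 0) ↔
      (∀ i ∈ leftCoords X, u i = 0) ∧ ∀ j ∈ rightCoords X, v j = 0 := by
  simp [Fin.forall_fin_add, leftCoords, rightCoords]

end Coords

section Vanishing

variable {M : Type*} [Zero M] [DecidableEq M] {k : ℕ}

-- Over `Fin k` rather than an arbitrary index type, the decidability instance of this filter is
-- literally the one in `IsPowerful`, so that `isPowerful_iff` holds by `Iff.rfl`.
def vanishing (S : Finset (Fin k → M)) (X : Finset (Fin k)) : Finset (Fin k → M) :=
  S.filter fun v => ∀ i ∈ X, v i = 0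

theorem isPowerful_iff {n : ℕ} {S : Finset (Fin n → ZMod 2)} :
    IsPowerful S ↔ ∀ X, ∃ d, #(vanishing S X) = 2 ^ d :=
  Iff.rfl

theorem vanishing_empty (S : Finset (Fin k → M)) : vanishing S ∅ = S :=
  filter_true_of_mem fun _ _ _ h => absurd h (notMem_empty _)

theorem zero_mem_vanishing {S : Finset (Fin k → M)} (h : 0 ∈ S) (X : Finset (Fin k)) :
    0 ∈ vanishing S X :=
  mem_filter.2 ⟨h, fun _ _ => rfl⟩

theorem vanishing_filter (S : Finset (Fin k → M)) (p : (Fin k → M) → Prop) [DecidablePred p]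
    (X : Finset (Fin k)) : vanishing (S.filter p) X = (vanishing S X).filter p :=
  filter_comm _ _ _

end Vanishing

theorem IsPowerful.zero_mem {n : ℕ} {S : Finset (Fin n → ZMod 2)} (h : IsPowerful S) :
    (0 : Fin n → ZMod 2) ∈ S := by
  obtain ⟨d, hd⟩ := h univ
  obtain ⟨v, hv⟩ := card_pos.1 (hd ▸ Nat.two_pow_pos d)
  obtain ⟨hvS, hv0⟩ := mem_filter.1 hv
  rwa [funext fun i => hv0 i (mem_univ i)] at hvS

theorem card_insert_zero_image_filter_ne_zero {α β : Type*} [Zero α] [DecidableEq α] [Zero β]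
    [DecidableEq β] {f : α → β} (hf : Injective f) (hf0 : ∀ a ≠ 0, f a ≠ 0) {T : Finset α}
    (hT : 0 ∈ T) : #(insert 0 ((T.filter (· ≠ 0)).image f)) = #T := by
  have h0 : (0 : β) ∉ (T.filter (· ≠ 0)).image f := by
    simp only [mem_image, mem_filter, not_exists, not_and]
    exact fun a ha => hf0 a ha.2
  rw [card_insert_of_notMem h0, card_image_of_injective _ hf, filter_ne', card_erase_add_one hT]

section Append

variable {M : Type*} [Zero M] [DecidableEq M] {m n : ℕ} {X : Finset (Fin (m + n))} {c : M}

theorem vanishing_image_append_const (S : Finset (Fin m → M)) (hc : c ≠ 0) :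
    vanishing (S.image fun u => Fin.append u fun _ : Fin n => c) X =
      if rightCoords X = ∅ then
        (vanishing S (leftCoords X)).image fun u => Fin.append u fun _ => c
      else ∅ := by
  rw [vanishing, filter_image]
  split_ifs with h
  · exact congrArg _ (filter_congr fun u _ => by simp [forall_mem_append_eq_zero_iff, h])
  · obtain ⟨j, hj⟩ := nonempty_iff_ne_empty.2 h
    exact image_eq_empty.2 (filter_false_of_mem fun u _ hu =>
      hc ((forall_mem_append_eq_zero_iff.1 hu).2 j hj))

theorem vanishing_image_const_append (S : Finset (Fin n → M)) (hc : c ≠ 0) :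
    vanishing (S.image fun v => Fin.append (fun _ : Fin m => c) v) X =
      if leftCoords X = ∅ then
        (vanishing S (rightCoords X)).image fun v => Fin.append (fun _ => c) v
      else ∅ := by
  rw [vanishing, filter_image]
  split_ifs with h
  · exact congrArg _ (filter_congr fun v _ => by simp [forall_mem_append_eq_zero_iff, h])
  · obtain ⟨i, hi⟩ := nonempty_iff_ne_empty.2 h
    exact image_eq_empty.2 (filter_false_of_mem fun v _ hv =>
      hc ((forall_mem_append_eq_zero_iff.1 hv).1 i hi))

end Append

section MutualFraming

variable {m n : ℕ} {Q : Finset (Fin m → ZMod 2)} {R : Finset (Fin n → ZMod 2)}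

theorem vanishing_mutualFraming {X : Finset (Fin (m + n))} (hX : X ≠ ∅) :
    vanishing (mutualFraming Q R) X =
      insert 0
        ((if rightCoords X = ∅ then
            ((vanishing Q (leftCoords X)).filter (· ≠ 0)).image fun u => Fin.append u fun _ => 1
          else ∅) ∪
        (if leftCoords X = ∅ then
            ((vanishing R (rightCoords X)).filter (· ≠ 0)).image
              fun v => Fin.append (fun _ => 1) v
          else ∅)) := by
  obtain ⟨i, hi⟩ := nonempty_iff_ne_empty.2 hX
  have h0 : ∀ j ∈ X, (0 : Fin (m + n) → ZMod 2) j = 0 := fun _ _ => rfl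
  have h1 : ¬∀ j ∈ X, (fun _ => (1 : ZMod 2)) j = 0 := fun h => one_ne_zero (h i hi)
  rw [mutualFraming, vanishing, filter_insert, if_pos h0, filter_insert, if_neg h1,
    filter_union, ← vanishing, ← vanishing,
    vanishing_image_append_const _ one_ne_zero, vanishing_image_const_append _ one_ne_zero,
    vanishing_filter, vanishing_filter]

theorem card_mutualFraming (hQ0 : 0 ∈ Q) (hR0 : 0 ∈ R) (hQ1 : (fun _ => 1) ∉ Q)
    (hR1 : (fun _ => 1) ∉ R) : #(mutualFraming Q R) = #Q + #R := by
  have h01 : (0 : Fin (m + n) → ZMod 2) ≠ fun _ => 1 := fun h =>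
    hQ1 ((Fin.append_eq_const_iff.1 ((Fin.append_eq_zero_iff.2 ⟨rfl, rfl⟩).trans h)).1 ▸ hQ0)
  have hQ' : ∀ u ∈ Q, u ≠ fun _ => 1 := fun u hu h => hQ1 (h ▸ hu)
  have hR' : ∀ v ∈ R, v ≠ fun _ => 1 := fun v hv h => hR1 (h ▸ hv)
  rw [mutualFraming, card_insert_of_notMem, card_insert_of_notMem, card_union_of_disjoint,
    card_image_of_injective _ (Fin.append_left_injective _),
    card_image_of_injective _ (Fin.append_right_injective _), filter_ne', filter_ne']
  · have := card_erase_add_one hQ0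
    have := card_erase_add_one hR0
    omega
  · simp only [disjoint_left, mem_image, mem_filter, not_exists, not_and]
    rintro _ ⟨u, ⟨hu, -⟩, rfl⟩ v - h
    exact hQ' u hu (Fin.append_inj.1 h).1.symm
  · simp only [mem_union, mem_image, mem_filter, not_or, not_exists, not_and]
    exact ⟨fun u hu h => hQ' u hu.1 (Fin.append_eq_const_iff.1 h).1,
      fun v hv h => hR' v hv.1 (Fin.append_eq_const_iff.1 h).2⟩
  · simp only [mem_insert, mem_union, mem_image, mem_filter, not_or, not_exists, not_and]
    exact ⟨h01, fun u hu h => hu.2 (Fin.append_eq_zero_iff.1 h).1,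
      fun v hv h => hv.2 (Fin.append_eq_zero_iff.1 h).2⟩

end MutualFraming

/-- If `Q` and `R` are powerful, `|Q| = |R|`, and neither contains the all-ones vector,
then the mutual framing `Q#R` is powerful. -/
theorem mutualFraming_powerful {m n : ℕ} (Q : Finset (Fin m → ZMod 2))
    (R : Finset (Fin n → ZMod 2)) (hQ : IsPowerful Q) (hR : IsPowerful R)
    (hcard : Q.card = R.card)
    (hQ1 : (fun _ => (1 : ZMod 2)) ∉ Q) (hR1 : (fun _ => (1 : ZMod 2)) ∉ R) :
    IsPowerful (mutualFraming Q R) := by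
  have hQ0 := hQ.zero_mem
  have hR0 := hR.zero_mem
  rw [isPowerful_iff] at hQ hR ⊢
  intro X
  rcases eq_or_ne X ∅ with rfl | hX
  · obtain ⟨d, hd⟩ := hQ ∅
    refine ⟨d + 1, ?_⟩
    rw [vanishing_empty] at hd ⊢
    rw [card_mutualFraming hQ0 hR0 hQ1 hR1, ← hcard, hd, pow_succ, mul_two]
  rw [vanishing_mutualFraming hX]
  by_cases hL : leftCoords X = ∅
  · have hR' : rightCoords X ≠ ∅ := fun h =>
      hX (eq_empty_of_leftCoords_eq_empty_of_rightCoords_eq_empty hL h)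
    obtain ⟨d, hd⟩ := hR (rightCoords X)
    refine ⟨d, ?_⟩
    rw [if_neg hR', if_pos hL, empty_union, ← hd]
    exact card_insert_zero_image_filter_ne_zero (Fin.append_right_injective _)
      (fun v hv h => hv (Fin.append_eq_zero_iff.1 h).2) (zero_mem_vanishing hR0 _)
  by_cases hR' : rightCoords X = ∅
  · obtain ⟨d, hd⟩ := hQ (leftCoords X)
    refine ⟨d, ?_⟩
    rw [if_pos hR', if_neg hL, union_empty, ← hd]
    exact card_insert_zero_image_filter_ne_zero (Fin.append_left_injective _)
      (fun u hu h => hu (Fin.append_eq_zero_iff.1 h).1) (zero_mem_vanishing hQ0 _)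
  · refine ⟨0, ?_⟩
    rw [if_neg hR', if_neg hL, union_empty, insert_empty, card_singleton, pow_zero]
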